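/- arXiv:2503.04447 — 3 statements merged into one kernel-verified Lean document; each statement's English description precedes it below -/
import Mathlib

section
/- Let A be a nonnegative symmetric n×n real matrix, let J ⊆ supp(A) be a symmetric label set with A_{ij} > 0 for all (i,j) ∈ J, let p ≥ 1 define Ā by Ā_{ij} = p·A_{ij} if (i,j) ∈ J and Ā_{ij} = A_{ij} otherwise, and let β > 0. If (Z*, H*) is a global minimizer of problem (MIP), then (Z*, H*) is also a global minimizer of problem (CP). -/
open Matrix BigOperators

/-- The graph Laplacian of a matrix: `L(M) = Diag(M e) - M`. -/
noncomputable def Lap {n : ℕ} (M : Matrix (Fin n) (Fin n) ℝ) : Matrix (Fin n) (Fin n) ℝ :=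
  Matrix.diagonal (fun i => ∑ j, M i j) - M

/-- The objective `f(Z, H) = tr(Hᵀ L(A ∘ Z) H) - β tr(Ā Z)`. -/
noncomputable def fobj {n d : ℕ} (A Abar : Matrix (Fin n) (Fin n) ℝ) (β : ℝ)
    (Z : Matrix (Fin n) (Fin n) ℝ) (H : Matrix (Fin n) (Fin d) ℝ) : ℝ :=
  Matrix.trace (Hᵀ * Lap (Matrix.hadamard A Z) * H) - β * Matrix.trace (Abar * Z)

lemma trace_form {n d : ℕ} (N : Matrix (Fin n) (Fin n) ℝ) (H : Matrix (Fin n) (Fin d) ℝ) :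
    Matrix.trace (Hᵀ * N * H) = ∑ i, ∑ j, N i j * (∑ k, H i k * H j k) := by
  simp only [Matrix.trace, Matrix.diag_apply, Matrix.mul_apply, Matrix.transpose_apply,
    Finset.sum_mul, Finset.mul_sum]
  conv_rhs => rw [Finset.sum_comm]
  rw [Finset.sum_comm]
  refine Finset.sum_congr rfl fun i _ => ?_
  rw [Finset.sum_comm]
  refine Finset.sum_congr rfl fun j _ => Finset.sum_congr rfl fun k _ => by ring

lemma fobj_eq {n d : ℕ} (A Abar : Matrix (Fin n) (Fin n) ℝ) (β : ℝ)
    (Z : Matrix (Fin n) (Fin n) ℝ) (H : Matrix (Fin n) (Fin d) ℝ) :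
    fobj A Abar β Z H = ∑ i, ∑ j,
      (A i j * ((∑ k, H i k * H i k) - ∑ k, H i k * H j k) - β * Abar j i) * Z i j := by
  unfold fobj
  rw [trace_form]
  have h2 : Matrix.trace (Abar * Z) = ∑ i, ∑ j, Abar j i * Z i j := by
    simp only [Matrix.trace, Matrix.diag_apply, Matrix.mul_apply]
    rw [Finset.sum_comm]
  rw [h2]
  have hd : ∀ i : Fin n, ∑ j, (Lap (Matrix.hadamard A Z)) i j * (∑ k, H i k * H j k)
      = ∑ j, (A i j * Z i j * (∑ k, H i k * H i k)
        - A i j * Z i j * (∑ k, H i k * H j k)) := by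
    intro i
    simp only [Lap, Matrix.sub_apply, Matrix.diagonal_apply, Matrix.hadamard_apply, sub_mul]
    rw [Finset.sum_sub_distrib]
    rw [Finset.sum_eq_single i (fun b _ hb => by simp [Ne.symm hb]) (by simp), if_pos rfl,
      Finset.sum_mul]
    exact (Finset.sum_sub_distrib ..).symm
  simp only [hd]
  rw [Finset.mul_sum, ← Finset.sum_sub_distrib]
  refine Finset.sum_congr rfl fun i _ => ?_
  rw [Finset.mul_sum, ← Finset.sum_sub_distrib]
  exact Finset.sum_congr rfl fun j _ => by ring

/-- Feasibility for problem (CP): `Z ∈ Sⁿ_A ∩ [0,1]^{n×n}` and `Hᵀ H = I_d`. -/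
def feasCP {n d : ℕ} (A : Matrix (Fin n) (Fin n) ℝ)
    (Z : Matrix (Fin n) (Fin n) ℝ) (H : Matrix (Fin n) (Fin d) ℝ) : Prop :=
  Zᵀ = Z ∧ (∀ i j, Z i j ≠ 0 → A i j ≠ 0) ∧ (∀ i j, 0 ≤ Z i j ∧ Z i j ≤ 1) ∧ Hᵀ * H = 1

/-- Feasibility for problem (MIP): `Z ∈ Sⁿ_A ∩ {0,1}^{n×n}` and `Hᵀ H = I_d`. -/
def feasMIP {n d : ℕ} (A : Matrix (Fin n) (Fin n) ℝ)
    (Z : Matrix (Fin n) (Fin n) ℝ) (H : Matrix (Fin n) (Fin d) ℝ) : Prop :=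
  Zᵀ = Z ∧ (∀ i j, Z i j ≠ 0 → A i j ≠ 0) ∧ (∀ i j, Z i j = 0 ∨ Z i j = 1) ∧ Hᵀ * H = 1

theorem stmt8 {n d : ℕ} (A Abar : Matrix (Fin n) (Fin n) ℝ)
    (hAsym : Aᵀ = A) (hAnn : ∀ i j, 0 ≤ A i j)
    (J : Set (Fin n × Fin n))
    (hJsym : ∀ i j, (i, j) ∈ J ↔ (j, i) ∈ J)
    (hJpos : ∀ i j, (i, j) ∈ J → 0 < A i j)
    (p : ℝ) (hp : 1 ≤ p)
    (hAbar : ∀ i j, ((i, j) ∈ J → Abar i j = p * A i j) ∧ ((i, j) ∉ J → Abar i j = A i j))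
    (β : ℝ) (hβ : 0 < β)
    (Zs : Matrix (Fin n) (Fin n) ℝ) (Hs : Matrix (Fin n) (Fin d) ℝ)
    (hfeas : feasMIP A Zs Hs)
    (hmin : ∀ (Z : Matrix (Fin n) (Fin n) ℝ) (H : Matrix (Fin n) (Fin d) ℝ),
      feasMIP A Z H → fobj A Abar β Zs Hs ≤ fobj A Abar β Z H) :
    feasCP A Zs Hs ∧
    ∀ (Z : Matrix (Fin n) (Fin n) ℝ) (H : Matrix (Fin n) (Fin d) ℝ), feasCP A Z H →
      fobj A Abar β Zs Hs ≤ fobj A Abar β Z H := by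
  have hA : ∀ i j : Fin n, A j i = A i j := fun i j => by
    have h := congrFun (congrFun hAsym j) i
    rw [Matrix.transpose_apply] at h
    exact h.symm
  obtain ⟨hZsym, hZsupp, hZbin, hHs⟩ := hfeas
  refine ⟨⟨hZsym, hZsupp, fun i j => by rcases hZbin i j with h | h <;> simp [h], hHs⟩, ?_⟩
  intro Z H hfc
  obtain ⟨hWsym, hWsupp, hW01, hH⟩ := hfc
  -- coefficients
  set c : Fin n → Fin n → ℝ := fun i j =>
    A i j * ((∑ k, H i k * H i k) - ∑ k, H i k * H j k) - β * Abar j i with hc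
  set dd : Fin n → Fin n → ℝ := fun i j => (c i j + c j i) / 2 with hdd
  -- Abar vanishes where A does
  have hAbar0 : ∀ i j, A i j = 0 → Abar i j = 0 := by
    intro i j h
    by_cases hJ : (i, j) ∈ J
    · exact absurd h (ne_of_gt (hJpos i j hJ))
    · rw [(hAbar i j).2 hJ, h]
  have hc0 : ∀ i j, A i j = 0 → c i j = 0 := by
    intro i j h
    have hji : A j i = 0 := by rw [hA]; exact h
    simp [hc, h, hAbar0 j i hji]
  have hdd0 : ∀ i j, A i j = 0 → dd i j = 0 := by
    intro i j h
    have : A j i = 0 := by rw [hA]; exact h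
    simp [hdd, hc0 i j h, hc0 j i this]
  have hddsym : ∀ i j, dd j i = dd i j := fun i j => by simp [hdd, add_comm]
  -- for symmetric W, the c-sum equals the dd-sum
  have hsymsum : ∀ W : Matrix (Fin n) (Fin n) ℝ, Wᵀ = W →
      (∑ i, ∑ j, c i j * W i j) = ∑ i, ∑ j, dd i j * W i j := by
    intro W hW
    have hswap : (∑ i, ∑ j, c i j * W i j) = ∑ i, ∑ j, c j i * W i j := by
      rw [Finset.sum_comm]
      refine Finset.sum_congr rfl fun i _ => Finset.sum_congr rfl fun j _ => ?_
      have h := congrFun (congrFun hW j) i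
      rw [Matrix.transpose_apply] at h
      rw [← h]
    have : (∑ i, ∑ j, dd i j * W i j)
        = ((∑ i, ∑ j, c i j * W i j) + ∑ i, ∑ j, c j i * W i j) / 2 := by
      rw [eq_div_iff (by norm_num : (2:ℝ) ≠ 0), Finset.sum_mul, ← Finset.sum_add_distrib]
      refine Finset.sum_congr rfl fun i _ => ?_
      rw [Finset.sum_mul, ← Finset.sum_add_distrib]
      refine Finset.sum_congr rfl fun j _ => ?_
      simp only [hdd]
      ring
    rw [this, ← hswap]
    ring
  -- the rounded matrix
  set Z' : Matrix (Fin n) (Fin n) ℝ := Matrix.of fun i j =>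
    if A i j = 0 then 0 else if dd i j ≤ 0 then 1 else 0 with hZ'
  have hZ'app : ∀ i j, Z' i j = if A i j = 0 then 0 else if dd i j ≤ 0 then 1 else 0 :=
    fun i j => rfl
  have hfeas' : feasMIP A Z' H := by
    refine ⟨?_, ?_, ?_, hH⟩
    · ext i j
      rw [Matrix.transpose_apply, hZ'app, hZ'app, hA j i, hddsym j i]
    · intro i j hne
      rw [hZ'app] at hne
      intro h0
      rw [if_pos h0] at hne
      exact hne rfl
    · intro i j
      rw [hZ'app]
      split_ifs <;> simp
  have hle : (∑ i, ∑ j, dd i j * Z' i j) ≤ ∑ i, ∑ j, dd i j * Z i j := by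
    refine Finset.sum_le_sum fun i _ => Finset.sum_le_sum fun j _ => ?_
    rw [hZ'app]
    by_cases h0 : A i j = 0
    · simp [h0, hdd0 i j h0]
    · rw [if_neg h0]
      by_cases hs : dd i j ≤ 0
      · rw [if_pos hs]
        exact mul_le_mul_of_nonpos_left (hW01 i j).2 hs
      · rw [if_neg hs, mul_zero]
        exact mul_nonneg (le_of_lt (lt_of_not_ge hs)) (hW01 i j).1
  calc fobj A Abar β Zs Hs ≤ fobj A Abar β Z' H := hmin Z' H hfeas'
    _ = ∑ i, ∑ j, dd i j * Z' i j := by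
        rw [fobj_eq, hsymsum Z' hfeas'.1]
    _ ≤ ∑ i, ∑ j, dd i j * Z i j := hle
    _ = fobj A Abar β Z H := by rw [fobj_eq, hsymsum Z hWsym]
end

section
/- Let A be a nonnegative symmetric n×n real matrix, let J ⊆ supp(A) be a symmetric label set with A_{ij} > 0 for all (i,j) ∈ J, let p ≥ 1 define Ā by Ā_{ij} = p·A_{ij} if (i,j) ∈ J and Ā_{ij} = A_{ij} otherwise, and let β > 0 with β·p > 2. Let 0 ≤ ε < 2·min_{(i,j)∈J} A_{ij}. Suppose (Z*, H*) satisfies Z* ∈ S^n_A ∩ {0,1}^{n×n}, (H*)^⊤ H* = I_d, and f(Z*, H*) − min_{Z ∈ S^n_A ∩ [0,1]^{n×n}} f(Z, H*) ≤ ε. Then Z*_{ij} = 1 for all (i,j) ∈ J. -/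
open Matrix BigOperators

/-- Elementary matrix with a single 1 entry. -/
def Eone {n : ℕ} (a b : Fin n) : Matrix (Fin n) (Fin n) ℝ :=
  Matrix.of fun x y => if x = a ∧ y = b then 1 else 0

lemma trace_mul_Eone {n : ℕ} (Abar : Matrix (Fin n) (Fin n) ℝ) (a b : Fin n) :
    Matrix.trace (Abar * Eone a b) = Abar b a := by
  simp [Matrix.trace, Matrix.mul_apply, Eone, Matrix.diag, ite_and, mul_ite]

lemma had_Eone {n : ℕ} (A : Matrix (Fin n) (Fin n) ℝ) (a b : Fin n) :
    Matrix.hadamard A (Eone a b) = A a b • Eone a b := by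
  ext x y
  by_cases h1 : x = a <;> by_cases h2 : y = b <;>
    simp [Matrix.hadamard, Eone, h1, h2]

lemma lap_add' {n : ℕ} (M N : Matrix (Fin n) (Fin n) ℝ) : Lap (M + N) = Lap M + Lap N := by
  unfold Lap
  ext a b
  simp [Matrix.diagonal_apply, Finset.sum_add_distrib]
  split <;> ring

lemma lap_smul {n : ℕ} (c : ℝ) (M : Matrix (Fin n) (Fin n) ℝ) : Lap (c • M) = c • Lap M := by
  unfold Lap
  ext x y
  simp [Matrix.diagonal_apply, mul_sub, mul_ite, Finset.mul_sum]

lemma lap_Eone_diag {n : ℕ} (i : Fin n) : Lap (Eone i i) = 0 := by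
  unfold Lap
  ext x y
  simp only [Matrix.sub_apply, Matrix.diagonal_apply, Eone, Matrix.of_apply, ite_and,
    Finset.sum_ite_eq', Finset.mem_univ, if_true, Matrix.zero_apply]
  rcases eq_or_ne x y with rfl | hxy <;> rcases eq_or_ne x i with rfl | hxi <;> simp_all [eq_comm]

lemma fobj_add' {n d : ℕ} (A Abar : Matrix (Fin n) (Fin n) ℝ) (β : ℝ)
    (Z Δ : Matrix (Fin n) (Fin n) ℝ) (H : Matrix (Fin n) (Fin d) ℝ) :
    fobj A Abar β (Z + Δ) H = fobj A Abar β Z H +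
      (Matrix.trace (Hᵀ * Lap (Matrix.hadamard A Δ) * H) - β * Matrix.trace (Abar * Δ)) := by
  unfold fobj
  rw [Matrix.hadamard_add, lap_add', Matrix.mul_add, Matrix.add_mul, Matrix.trace_add,
    Matrix.mul_add, Matrix.trace_add]
  ring

lemma trace_lap_pair {n d : ℕ} (H : Matrix (Fin n) (Fin d) ℝ) (i j : Fin n) (hij : i ≠ j) :
    Matrix.trace (Hᵀ * Lap (Eone i j + Eone j i) * H) = ∑ k, (H i k - H j k)^2 := by
  have hL : Lap (Eone i j + Eone j i) = Matrix.of fun x y =>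
      ((if x = i ∧ y = i then 1 else 0) + (if x = j ∧ y = j then 1 else 0)
      - (if x = i ∧ y = j then 1 else 0)) - (if x = j ∧ y = i then 1 else 0) := by
    unfold Lap
    ext x y
    simp only [Matrix.sub_apply, Matrix.add_apply, Matrix.diagonal_apply, Matrix.of_apply, Eone,
      ite_and, Finset.sum_add_distrib, Finset.sum_ite_eq', Finset.mem_univ, if_true]
    rcases eq_or_ne x i with rfl | hxi <;> rcases eq_or_ne x j with rfl | hxj <;>
      rcases eq_or_ne x y with rfl | hxy <;> simp_all [eq_comm]
  rw [hL]
  simp only [Matrix.trace, Matrix.diag, Matrix.mul_apply, Matrix.transpose_apply, Matrix.of_apply,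
    ite_and, sub_mul, add_mul, ite_mul, zero_mul, one_mul, Finset.sum_sub_distrib,
    Finset.sum_add_distrib, Finset.sum_ite_eq, Finset.sum_ite_eq', Finset.mem_univ, if_true]
  refine Finset.sum_congr rfl fun k _ => ?_
  simp only [mul_sub, mul_add, mul_ite, mul_zero, mul_one, Finset.sum_sub_distrib,
    Finset.sum_add_distrib, Finset.sum_ite_eq', Finset.mem_univ, if_true, sub_mul, add_mul,
    ite_mul, zero_mul]
  ring

lemma rows_dist_sq_le_two {n d : ℕ} (H : Matrix (Fin n) (Fin d) ℝ) (hHH : Hᵀ * H = 1)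
    (i j : Fin n) (hij : i ≠ j) : ∑ k, (H i k - H j k)^2 ≤ 2 := by
  set w : Fin n → ℝ := fun a => (if a = i then (1:ℝ) else 0) - (if a = j then 1 else 0) with hw
  set v : Fin d → ℝ := fun k => H i k - H j k with hv
  have hvw : Hᵀ *ᵥ w = v := by
    ext k
    simp only [Matrix.mulVec, dotProduct, Matrix.transpose_apply, hw, hv, mul_sub,
      mul_ite, mul_one, mul_zero, Finset.sum_sub_distrib, Finset.sum_ite_eq', Finset.mem_univ,
      if_true]
  have hww : ∑ a, w a ^ 2 = 2 := by
    have he : ∀ a, w a ^ 2 = (if a = i then 1 else 0) + (if a = j then 1 else 0) := by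
      intro a
      by_cases h1 : a = i
      · have h2 : a ≠ j := fun h => hij (h1.symm.trans h)
        simp [hw, h1, h2, hij]
      · by_cases h2 : a = j
        · simp [hw, h1, h2, hij.symm]
        · simp [hw, h1, h2]
    simp only [he, Finset.sum_add_distrib, Finset.sum_ite_eq', Finset.mem_univ, if_true]
    norm_num
  set u : Fin n → ℝ := H *ᵥ v with hu
  have huu : u ⬝ᵥ u = v ⬝ᵥ v := by
    rw [hu, Matrix.dotProduct_mulVec, ← Matrix.mulVec_transpose, Matrix.mulVec_mulVec, hHH,
      Matrix.one_mulVec]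
  have hvv : v ⬝ᵥ v = ∑ k, (H i k - H j k)^2 := by
    simp [dotProduct, hv, sq]
  have hwu : w ⬝ᵥ u = v ⬝ᵥ v := by
    rw [hu, Matrix.dotProduct_mulVec, ← Matrix.mulVec_transpose, hvw]
  set t : ℝ := ∑ k, (H i k - H j k)^2 with ht
  have ht0 : 0 ≤ t := Finset.sum_nonneg fun k _ => sq_nonneg _
  have hcs : (∑ a, w a * u a) ^ 2 ≤ (∑ a, w a ^ 2) * ∑ a, u a ^ 2 :=
    Finset.sum_mul_sq_le_sq_mul_sq Finset.univ w u
  have h1 : ∑ a, w a * u a = t := by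
    have h := hwu.trans hvv
    simpa [dotProduct, ht] using h
  have h2 : ∑ a, u a ^ 2 = t := by
    have : ∑ a, u a ^ 2 = u ⬝ᵥ u := by simp [dotProduct, sq]
    rw [this, huu, hvv]
  rw [h1, h2, hww] at hcs
  nlinarith

theorem stmt12 {n d : ℕ} (A Abar : Matrix (Fin n) (Fin n) ℝ)
    (hAsym : Aᵀ = A) (hAnn : ∀ i j, 0 ≤ A i j)
    (J : Set (Fin n × Fin n))
    (hJsym : ∀ i j, (i, j) ∈ J ↔ (j, i) ∈ J)
    (hJpos : ∀ i j, (i, j) ∈ J → 0 < A i j)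
    (p : ℝ) (hp : 1 ≤ p)
    (hAbar : ∀ i j, ((i, j) ∈ J → Abar i j = p * A i j) ∧ ((i, j) ∉ J → Abar i j = A i j))
    (β : ℝ) (hβ : 0 < β) (hβp : 2 < β * p)
    (ε : ℝ) (hε0 : 0 ≤ ε) (hεJ : ∀ i j, (i, j) ∈ J → ε < 2 * A i j)
    (Zs : Matrix (Fin n) (Fin n) ℝ) (Hs : Matrix (Fin n) (Fin d) ℝ)
    (hfeas : feasMIP A Zs Hs)
    (hnear : ∀ Z : Matrix (Fin n) (Fin n) ℝ,
      (Zᵀ = Z ∧ (∀ i j, Z i j ≠ 0 → A i j ≠ 0) ∧ (∀ i j, 0 ≤ Z i j ∧ Z i j ≤ 1)) →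
      fobj A Abar β Zs Hs ≤ fobj A Abar β Z Hs + ε) :
    ∀ i j, (i, j) ∈ J → Zs i j = 1 := by
  intro i j hij
  obtain ⟨hZsym, hZsupp, hZ01, hHH⟩ := hfeas
  by_contra hne
  have h0 : Zs i j = 0 := (hZ01 i j).resolve_right hne
  have hji : (j, i) ∈ J := (hJsym i j).mp hij
  have hApos : 0 < A i j := hJpos i j hij
  have hAji : A j i = A i j := by
    have := congrFun (congrFun hAsym j) i
    simpa [Matrix.transpose_apply] using this.symm
  have hZji : Zs j i = 0 := by
    have := congrFun (congrFun hZsym j) i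
    simp only [Matrix.transpose_apply] at this
    rw [← this, h0]
  have hZ01' : ∀ a b, 0 ≤ Zs a b ∧ Zs a b ≤ 1 := by
    intro a b; rcases hZ01 a b with h | h <;> simp [h]
  have hεlt : ε < 2 * A i j := hεJ i j hij
  rcases eq_or_ne i j with rfl | hne2
  · -- diagonal case
    set Δ : Matrix (Fin n) (Fin n) ℝ := Eone i i with hΔ
    have hΔapp : ∀ a b, Δ a b = if a = i ∧ b = i then 1 else 0 := fun a b => rfl
    have hfeasZ : ((Zs + Δ)ᵀ = Zs + Δ ∧ (∀ a b, (Zs + Δ) a b ≠ 0 → A a b ≠ 0) ∧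
        (∀ a b, 0 ≤ (Zs + Δ) a b ∧ (Zs + Δ) a b ≤ 1)) := by
      refine ⟨?_, ?_, ?_⟩
      · rw [Matrix.transpose_add, hZsym]
        congr 1
        ext x y
        simp [hΔ, Eone, and_comm]
      · intro a b hab
        by_cases h : a = i ∧ b = i
        · rw [h.1, h.2]; exact ne_of_gt hApos
        · apply hZsupp
          simpa [Matrix.add_apply, hΔapp, h] using hab
      · intro a b
        by_cases h : a = i ∧ b = i
        · simp [Matrix.add_apply, hΔapp, h, h.1, h.2, h0]
        · have := hZ01' a b
          simp only [Matrix.add_apply, hΔapp, if_neg h, add_zero]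
          exact this
    have hkey := hnear _ hfeasZ
    rw [fobj_add'] at hkey
    have hhad : Matrix.hadamard A Δ = A i i • Eone i i := had_Eone A i i
    have hlap0 : Lap (Matrix.hadamard A Δ) = 0 := by
      rw [hhad, lap_smul, lap_Eone_diag, smul_zero]
    have htr0 : Matrix.trace (Hsᵀ * Lap (Matrix.hadamard A Δ) * Hs) = 0 := by
      rw [hlap0, Matrix.mul_zero, Matrix.zero_mul, Matrix.trace_zero]
    have hS : Matrix.trace (Abar * Δ) = p * A i i := by
      rw [hΔ, trace_mul_Eone, (hAbar i i).1 hij]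
    rw [htr0, hS] at hkey
    nlinarith [hAnn i i, hApos]
  · -- off-diagonal case
    set Δ : Matrix (Fin n) (Fin n) ℝ := Eone i j + Eone j i with hΔ
    have hΔapp : ∀ a b, Δ a b =
        (if a = i ∧ b = j then (1:ℝ) else 0) + (if a = j ∧ b = i then 1 else 0) := fun a b => rfl
    have hfeasZ : ((Zs + Δ)ᵀ = Zs + Δ ∧ (∀ a b, (Zs + Δ) a b ≠ 0 → A a b ≠ 0) ∧
        (∀ a b, 0 ≤ (Zs + Δ) a b ∧ (Zs + Δ) a b ≤ 1)) := by
      refine ⟨?_, ?_, ?_⟩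
      · rw [Matrix.transpose_add, hZsym]
        congr 1
        ext x y
        simp only [Matrix.transpose_apply, hΔapp]
        rw [add_comm]
        congr 1 <;> simp [and_comm]
      · intro a b hab
        by_cases h1 : a = i ∧ b = j
        · rw [h1.1, h1.2]; exact ne_of_gt hApos
        · by_cases h2 : a = j ∧ b = i
          · rw [h2.1, h2.2, hAji]; exact ne_of_gt hApos
          · apply hZsupp
            simpa [Matrix.add_apply, hΔapp, h1, h2] using hab
      · intro a b
        by_cases h1 : a = i ∧ b = j
        · have hb : ¬(a = j ∧ b = i) := fun h => hne2 (h1.1.symm.trans h.1)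
          simp [Matrix.add_apply, hΔapp, h1, hb, h1.1, h1.2, h0, hne2]
        · by_cases h2 : a = j ∧ b = i
          · simp [Matrix.add_apply, hΔapp, h1, h2, h2.1, h2.2, hZji, hne2]
          · have := hZ01' a b
            simp only [Matrix.add_apply, hΔapp, if_neg h1, if_neg h2, add_zero]
            exact this
    have hkey := hnear _ hfeasZ
    rw [fobj_add'] at hkey
    have hhad : Matrix.hadamard A Δ = A i j • (Eone i j + Eone j i) := by
      rw [hΔ, Matrix.hadamard_add, had_Eone, had_Eone, hAji, smul_add]
    have htr : Matrix.trace (Hsᵀ * Lap (Matrix.hadamard A Δ) * Hs)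
        = A i j * ∑ k, (Hs i k - Hs j k)^2 := by
      rw [hhad, lap_smul, Matrix.mul_smul, Matrix.smul_mul, Matrix.trace_smul,
        trace_lap_pair Hs i j hne2, smul_eq_mul]
    have hS : Matrix.trace (Abar * Δ) = 2 * (p * A i j) := by
      rw [hΔ, Matrix.mul_add, Matrix.trace_add, trace_mul_Eone, trace_mul_Eone,
        (hAbar i j).1 hij, (hAbar j i).1 hji, hAji]
      ring
    rw [htr, hS] at hkey
    have hle2 : ∑ k, (Hs i k - Hs j k)^2 ≤ 2 := rows_dist_sq_le_two Hs hHH i j hne2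
    nlinarith [mul_le_mul_of_nonneg_left hle2 hApos.le]
end

section
/- Let A be a nonnegative symmetric n×n real matrix, let Z ∈ S^n_A ∩ [0,1]^{n×n}, and let d be an integer with rank(L(A ∘ Z)) ≤ n − d ≤ rank(L(A)). Then there exists a matrix Z̄ ∈ S^n_A ∩ {0,1}^{n×n} with Z̄ ≥ Z entrywise and rank(L(A ∘ Z̄)) = n − d. -/
open Matrix Module BigOperators

variable {n : ℕ}

lemma lap_mulVec (M : Matrix (Fin n) (Fin n) ℝ) (x : Fin n → ℝ) (i : Fin n) :
    (Lap M *ᵥ x) i = ∑ j, M i j * (x i - x j) := by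
  simp only [Lap, sub_mulVec, Pi.sub_apply, mulVec_diagonal]
  rw [mulVec, dotProduct]
  rw [Finset.sum_mul]
  rw [← Finset.sum_sub_distrib]
  congr 1; ext j; ring

def locConst (M : Matrix (Fin n) (Fin n) ℝ) : Submodule ℝ (Fin n → ℝ) where
  carrier := {x | ∀ i j, M i j ≠ 0 → x i = x j}
  add_mem' := by intro a b ha hb i j h; simp [ha i j h, hb i j h]
  zero_mem' := by intro i j h; rfl
  smul_mem' := by intro c a ha i j h; simp [ha i j h]

lemma mem_locConst {M : Matrix (Fin n) (Fin n) ℝ} {x : Fin n → ℝ} :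
    x ∈ locConst M ↔ ∀ i j, M i j ≠ 0 → x i = x j := Iff.rfl

lemma quad_form (M : Matrix (Fin n) (Fin n) ℝ) (hsym : Mᵀ = M) (x : Fin n → ℝ) :
    2 * (x ⬝ᵥ (Lap M *ᵥ x)) = ∑ i, ∑ j, M i j * (x i - x j)^2 := by
  have h1 : x ⬝ᵥ (Lap M *ᵥ x) = ∑ i, ∑ j, M i j * (x i * (x i - x j)) := by
    rw [dotProduct]
    congr 1; ext i
    rw [lap_mulVec, Finset.mul_sum]
    congr 1; ext j; ring
  have h2 : (∑ i, ∑ j, M i j * (x i * (x i - x j)))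
      = ∑ i, ∑ j, M i j * (x j * (x j - x i)) := by
    rw [Finset.sum_comm]
    congr 1; ext i; congr 1; ext j
    have : M j i = M i j := by conv_lhs => rw [← hsym, transpose_apply]
    rw [this]
  rw [h1]
  rw [two_mul]
  nth_rewrite 2 [h2]
  rw [← Finset.sum_add_distrib]
  congr 1; ext i
  rw [← Finset.sum_add_distrib]
  congr 1; ext j; ring

lemma ker_lap_eq (M : Matrix (Fin n) (Fin n) ℝ) (hsym : Mᵀ = M) (hnn : ∀ i j, 0 ≤ M i j) :
    LinearMap.ker (Lap M).mulVecLin = locConst M := by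
  ext x
  simp only [LinearMap.mem_ker, mulVecLin_apply, mem_locConst]
  constructor
  · intro hx
    have hq : ∑ i, ∑ j, M i j * (x i - x j)^2 = 0 := by
      rw [← quad_form M hsym, hx]; simp
    have hterm : ∀ i ∈ Finset.univ, ∀ j ∈ Finset.univ, M i j * (x i - x j)^2 = 0 := by
      have := (Finset.sum_eq_zero_iff_of_nonneg (fun i _ => Finset.sum_nonneg
        (fun j _ => mul_nonneg (hnn i j) (sq_nonneg _)))).mp hq
      intro i hi j hj
      exact (Finset.sum_eq_zero_iff_of_nonneg
        (fun j _ => mul_nonneg (hnn i j) (sq_nonneg _))).mp (this i hi) j hj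
    intro i j hMij
    have := hterm i (Finset.mem_univ i) j (Finset.mem_univ j)
    rcases mul_eq_zero.mp this with h | h
    · exact absurd h hMij
    · have := pow_eq_zero_iff (n := 2) (by norm_num) |>.mp h
      linarith [sub_eq_zero.mp this]
  · intro hx
    funext i
    rw [lap_mulVec]
    apply Finset.sum_eq_zero
    intro j _
    rcases eq_or_ne (M i j) 0 with h | h
    · rw [h, zero_mul]
    · rw [hx i j h, sub_self, mul_zero]

lemma rank_lap (M : Matrix (Fin n) (Fin n) ℝ) (hsym : Mᵀ = M) (hnn : ∀ i j, 0 ≤ M i j) :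
    (Lap M).rank + finrank ℝ (locConst M) = n := by
  rw [← ker_lap_eq M hsym hnn, Matrix.rank,
    LinearMap.finrank_range_add_finrank_ker (Lap M).mulVecLin]
  simp

lemma locConst_antitone {M N : Matrix (Fin n) (Fin n) ℝ}
    (h : ∀ i j, M i j ≠ 0 → N i j ≠ 0) : locConst N ≤ locConst M := by
  intro x hx i j hMij
  exact hx i j (h i j hMij)

lemma hada_sym {A B : Matrix (Fin n) (Fin n) ℝ} (hAsym : Aᵀ = A) (hBsym : Bᵀ = B) :
    (Matrix.hadamard A B)ᵀ = Matrix.hadamard A B := by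
  ext a b
  simp only [transpose_apply, Matrix.hadamard_apply]
  have h1 : A b a = A a b := by conv_lhs => rw [← hAsym, transpose_apply]
  have h2 : B b a = B a b := by conv_lhs => rw [← hBsym, transpose_apply]
  rw [h1, h2]

lemma hada_nn {A B : Matrix (Fin n) (Fin n) ℝ} (hAnn : ∀ i j, 0 ≤ A i j)
    (hB01 : ∀ i j, B i j = 0 ∨ B i j = 1) : ∀ i j, 0 ≤ (Matrix.hadamard A B) i j := by
  intro i j
  rcases hB01 i j with h | h <;> simp [Matrix.hadamard_apply, h, hAnn i j]

lemma step_lemma (A : Matrix (Fin n) (Fin n) ℝ) (hAsym : Aᵀ = A) (hAnn : ∀ i j, 0 ≤ A i j)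
    (B : Matrix (Fin n) (Fin n) ℝ) (hBsym : Bᵀ = B)
    (hB01 : ∀ i j, B i j = 0 ∨ B i j = 1) (hBsupp : ∀ i j, B i j ≠ 0 → A i j ≠ 0)
    (hlt : (Lap (Matrix.hadamard A B)).rank < (Lap A).rank) :
    ∃ B' : Matrix (Fin n) (Fin n) ℝ, B'ᵀ = B' ∧ (∀ i j, B' i j = 0 ∨ B' i j = 1) ∧
      (∀ i j, B' i j ≠ 0 → A i j ≠ 0) ∧ (∀ i j, B i j ≤ B' i j) ∧
      (Lap (Matrix.hadamard A B')).rank = (Lap (Matrix.hadamard A B)).rank + 1 := by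
  have hABsym := hada_sym hAsym hBsym
  have hABnn := hada_nn hAnn hB01
  have hrk := rank_lap _ hABsym hABnn
  have hrkA := rank_lap A hAsym hAnn
  -- finrank K_A < finrank K_AB
  have hfr : finrank ℝ (locConst A) < finrank ℝ (locConst (Matrix.hadamard A B)) := by omega
  -- not K_AB ≤ K_A
  have hnle : ¬ (locConst (Matrix.hadamard A B) ≤ locConst A) := by
    intro hle
    exact absurd (Submodule.finrank_mono hle) (by omega)
  rw [SetLike.not_le_iff_exists] at hnle
  obtain ⟨x, hxK, hxnA⟩ := hnle
  rw [mem_locConst] at hxnA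
  push_neg at hxnA
  obtain ⟨i, j, hAij, hxij⟩ := hxnA
  have hBij : B i j = 0 := by
    rcases hB01 i j with h | h
    · exact h
    · exfalso
      apply hxij
      exact hxK i j (by simp [Matrix.hadamard_apply, h, hAij])
  have hBji : B j i = 0 := by
    have : B j i = B i j := by conv_lhs => rw [← hBsym, transpose_apply]
    rw [this, hBij]
  set B' : Matrix (Fin n) (Fin n) ℝ :=
    Matrix.of (fun a b => if (a = i ∧ b = j) ∨ (a = j ∧ b = i) then 1 else B a b) with hB'
  have hB'app : ∀ a b, B' a b = if (a = i ∧ b = j) ∨ (a = j ∧ b = i) then 1 else B a b :=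
    fun a b => rfl
  have hB'sym : B'ᵀ = B' := by
    ext a b
    rw [transpose_apply, hB'app, hB'app]
    have h2 : B b a = B a b := by conv_lhs => rw [← hBsym, transpose_apply]
    by_cases h : (a = i ∧ b = j) ∨ (a = j ∧ b = i)
    · rcases h with ⟨h1, h2'⟩ | ⟨h1, h2'⟩ <;> subst h1 <;> subst h2' <;> simp
    · have h' : ¬ ((b = i ∧ a = j) ∨ (b = j ∧ a = i)) := by tauto
      rw [if_neg h, if_neg h', h2]
  have hB'01 : ∀ a b, B' a b = 0 ∨ B' a b = 1 := by
    intro a b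
    rw [hB'app]
    split
    · right; rfl
    · exact hB01 a b
  have hB'supp : ∀ a b, B' a b ≠ 0 → A a b ≠ 0 := by
    intro a b h
    rw [hB'app] at h
    by_cases hc : (a = i ∧ b = j) ∨ (a = j ∧ b = i)
    · rcases hc with ⟨h1, h2⟩ | ⟨h1, h2⟩
      · rw [h1, h2]; exact hAij
      · rw [h1, h2, show A j i = A i j from by conv_lhs => rw [← hAsym, transpose_apply]]
        exact hAij
    · rw [if_neg hc] at h
      exact hBsupp a b h
  have hle : ∀ a b, B a b ≤ B' a b := by
    intro a b
    rw [hB'app]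
    by_cases hc : (a = i ∧ b = j) ∨ (a = j ∧ b = i)
    · rw [if_pos hc]
      rcases hc with ⟨h1, h2⟩ | ⟨h1, h2⟩ <;> subst h1 <;> subst h2 <;>
        simp [hBij, hBji, zero_le_one]
    · rw [if_neg hc]
  -- support inclusion : supp (A∘B) ⊆ supp (A∘B')
  have hsupp_incl : ∀ a b, (Matrix.hadamard A B) a b ≠ 0 → (Matrix.hadamard A B') a b ≠ 0 := by
    intro a b h
    simp only [Matrix.hadamard_apply] at h ⊢
    rw [hB'app]
    by_cases hc : (a = i ∧ b = j) ∨ (a = j ∧ b = i)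
    · exfalso
      rcases hc with ⟨h1, h2⟩ | ⟨h1, h2⟩ <;> subst h1 <;> subst h2 <;>
        simp [hBij, hBji] at h
    · rw [if_neg hc]; exact h
  have hK'leK : locConst (Matrix.hadamard A B') ≤ locConst (Matrix.hadamard A B) :=
    locConst_antitone hsupp_incl
  have hxnK' : x ∉ locConst (Matrix.hadamard A B') := by
    intro hx
    apply hxij
    apply hx i j
    simp [Matrix.hadamard_apply, hB'app, hAij]
  have hKlt : locConst (Matrix.hadamard A B') < locConst (Matrix.hadamard A B) :=
    lt_of_le_of_ne hK'leK (fun h => hxnK' (h ▸ hxK))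
  have hfrlt : finrank ℝ (locConst (Matrix.hadamard A B'))
      < finrank ℝ (locConst (Matrix.hadamard A B)) :=
    Submodule.finrank_lt_finrank_of_lt hKlt
  -- upper bound: finrank K ≤ finrank K' + 1
  set K := locConst (Matrix.hadamard A B) with hKeq
  set K' := locConst (Matrix.hadamard A B') with hK'eq
  have hub : finrank ℝ K ≤ finrank ℝ K' + 1 := by
    set φ : (Fin n → ℝ) →ₗ[ℝ] ℝ := (LinearMap.proj i : (Fin n → ℝ) →ₗ[ℝ] ℝ) - (LinearMap.proj j : (Fin n → ℝ) →ₗ[ℝ] ℝ) with hφ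
    set ψ := φ.domRestrict K with hψ
    have hrn := LinearMap.finrank_range_add_finrank_ker ψ
    have h1 : finrank ℝ (LinearMap.range ψ) ≤ 1 := by
      have := Submodule.finrank_le (LinearMap.range ψ)
      simpa using this
    have h2 : finrank ℝ (LinearMap.ker ψ) ≤ finrank ℝ K' := by
      have hmem : ∀ y : LinearMap.ker ψ, (y : Fin n → ℝ) ∈ K' := by
        rintro ⟨⟨y, hyK⟩, hyker⟩
        have h0 : φ y = 0 := by
          have h1 := hyker
          rw [LinearMap.mem_ker, hψ, LinearMap.domRestrict_apply] at h1
          exact h1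
        have hyij : y i = y j := by
          simp only [hφ, LinearMap.sub_apply, LinearMap.proj_apply] at h0
          linarith
        intro a b hab
        simp only [Matrix.hadamard_apply, hB'app] at hab
        by_cases hc : (a = i ∧ b = j) ∨ (a = j ∧ b = i)
        · rcases hc with ⟨h1', h2'⟩ | ⟨h1', h2'⟩ <;> subst h1' <;> subst h2'
          · exact hyij
          · exact hyij.symm
        · rw [if_neg hc] at hab
          exact hyK a b (by simpa [Matrix.hadamard_apply] using hab)
      set f : LinearMap.ker ψ →ₗ[ℝ] K' :=
        LinearMap.codRestrict K' ((K.subtype).comp (LinearMap.ker ψ).subtype) hmem with hf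
      have hinj : Function.Injective f := by
        intro a b hab
        have : ((K.subtype).comp (LinearMap.ker ψ).subtype) a
            = ((K.subtype).comp (LinearMap.ker ψ).subtype) b := by
          have := congrArg (Subtype.val) hab
          simpa [hf, LinearMap.codRestrict] using this
        exact Subtype.ext (Subtype.ext (by simpa using this))
      exact LinearMap.finrank_le_finrank_of_injective hinj
    omega
  have hrk' := rank_lap _ (hada_sym hAsym hB'sym) (hada_nn hAnn hB'01)
  rw [← hK'eq] at hrk'
  refine ⟨B', hB'sym, hB'01, hB'supp, hle, ?_⟩
  omega

lemma iter_lemma (A : Matrix (Fin n) (Fin n) ℝ) (hAsym : Aᵀ = A) (hAnn : ∀ i j, 0 ≤ A i j) :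
    ∀ k : ℕ, ∀ B : Matrix (Fin n) (Fin n) ℝ,
    Bᵀ = B → (∀ i j, B i j = 0 ∨ B i j = 1) → (∀ i j, B i j ≠ 0 → A i j ≠ 0) →
    (Lap (Matrix.hadamard A B)).rank + k ≤ (Lap A).rank →
    ∃ B', B'ᵀ = B' ∧ (∀ i j, B' i j = 0 ∨ B' i j = 1) ∧ (∀ i j, B' i j ≠ 0 → A i j ≠ 0) ∧
      (∀ i j, B i j ≤ B' i j) ∧
      (Lap (Matrix.hadamard A B')).rank = (Lap (Matrix.hadamard A B)).rank + k := by
  intro k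
  induction k with
  | zero => intro B h1 h2 h3 _; exact ⟨B, h1, h2, h3, fun i j => le_refl _, by simp⟩
  | succ k ih =>
    intro B h1 h2 h3 hk
    obtain ⟨B'', s1, s2, s3, s4, s5⟩ := step_lemma A hAsym hAnn B h1 h2 h3 (by omega)
    obtain ⟨B', t1, t2, t3, t4, t5⟩ := ih B'' s1 s2 s3 (by omega)
    exact ⟨B', t1, t2, t3, fun i j => le_trans (s4 i j) (t4 i j), by omega⟩

theorem stmt16 {n : ℕ} (A : Matrix (Fin n) (Fin n) ℝ)
    (hAsym : Aᵀ = A) (hAnn : ∀ i j, 0 ≤ A i j)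
    (Z : Matrix (Fin n) (Fin n) ℝ)
    (hZsym : Zᵀ = Z) (hZsupp : ∀ i j, Z i j ≠ 0 → A i j ≠ 0)
    (hZ01 : ∀ i j, 0 ≤ Z i j ∧ Z i j ≤ 1)
    (d : ℤ)
    (hd₁ : ((Lap (Matrix.hadamard A Z)).rank : ℤ) ≤ (n : ℤ) - d)
    (hd₂ : (n : ℤ) - d ≤ ((Lap A).rank : ℤ)) :
    ∃ Zbar : Matrix (Fin n) (Fin n) ℝ,
      Zbarᵀ = Zbar ∧ (∀ i j, Zbar i j ≠ 0 → A i j ≠ 0) ∧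
      (∀ i j, Zbar i j = 0 ∨ Zbar i j = 1) ∧
      (∀ i j, Z i j ≤ Zbar i j) ∧
      ((Lap (Matrix.hadamard A Zbar)).rank : ℤ) = (n : ℤ) - d := by
  set B₀ : Matrix (Fin n) (Fin n) ℝ :=
    Matrix.of (fun i j => if Z i j = 0 then 0 else 1) with hB₀
  have hB₀app : ∀ i j, B₀ i j = if Z i j = 0 then 0 else 1 := fun i j => rfl
  have hB₀sym : B₀ᵀ = B₀ := by
    ext a b
    rw [transpose_apply, hB₀app, hB₀app,
      show Z b a = Z a b from by conv_lhs => rw [← hZsym, transpose_apply]]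
  have hB₀01 : ∀ i j, B₀ i j = 0 ∨ B₀ i j = 1 := by
    intro i j; rw [hB₀app]; split <;> simp
  have hB₀supp : ∀ i j, B₀ i j ≠ 0 → A i j ≠ 0 := by
    intro i j h
    rw [hB₀app] at h
    by_cases hz : Z i j = 0
    · simp [hz] at h
    · exact hZsupp i j hz
  have hZleB₀ : ∀ i j, Z i j ≤ B₀ i j := by
    intro i j
    rw [hB₀app]
    split
    · next h => rw [h]
    · exact (hZ01 i j).2
  -- ranks of A∘Z and A∘B₀ agree
  have hAZsym : (Matrix.hadamard A Z)ᵀ = Matrix.hadamard A Z := hada_sym hAsym hZsym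
  have hAZnn : ∀ i j, 0 ≤ (Matrix.hadamard A Z) i j :=
    fun i j => mul_nonneg (hAnn i j) (hZ01 i j).1
  have hsupp_eq : locConst (Matrix.hadamard A Z) = locConst (Matrix.hadamard A B₀) := by
    apply le_antisymm
    · apply locConst_antitone
      intro i j h
      simp only [Matrix.hadamard_apply, hB₀app] at h ⊢
      rcases mul_ne_zero_iff.mp h with ⟨hA, hB⟩
      by_cases hz : Z i j = 0
      · simp [hz] at hB
      · exact mul_ne_zero hA hz
    · apply locConst_antitone
      intro i j h
      simp only [Matrix.hadamard_apply, hB₀app] at h ⊢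
      rcases mul_ne_zero_iff.mp h with ⟨hA, hZ'⟩
      exact mul_ne_zero hA (by simp [hZ'])
  have hrkZ := rank_lap _ hAZsym hAZnn
  have hrkB₀ := rank_lap _ (hada_sym hAsym hB₀sym) (hada_nn hAnn hB₀01)
  rw [hsupp_eq] at hrkZ
  have hrkeq : (Lap (Matrix.hadamard A Z)).rank = (Lap (Matrix.hadamard A B₀)).rank := by
    omega
  set k : ℕ := ((n : ℤ) - d - (Lap (Matrix.hadamard A Z)).rank).toNat with hk
  have hknn : (0:ℤ) ≤ (n : ℤ) - d - (Lap (Matrix.hadamard A Z)).rank := by omega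
  have hkval : (k : ℤ) = (n : ℤ) - d - (Lap (Matrix.hadamard A Z)).rank :=
    Int.toNat_of_nonneg hknn
  have hcond : (Lap (Matrix.hadamard A B₀)).rank + k ≤ (Lap A).rank := by omega
  obtain ⟨B', t1, t2, t3, t4, t5⟩ := iter_lemma A hAsym hAnn k B₀ hB₀sym hB₀01 hB₀supp hcond
  refine ⟨B', t1, t3, t2, fun i j => le_trans (hZleB₀ i j) (t4 i j), ?_⟩
  have : ((Lap (Matrix.hadamard A B')).rank : ℤ)
      = ((Lap (Matrix.hadamard A B₀)).rank : ℤ) + k := by rw [t5]; push_cast; ring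
  omega
end
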